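/- arXiv:2412.05726 — 2 statements merged into one kernel-verified Lean document; each statement's English description precedes it below -/
import Mathlib

section
/- Let s_β, s_λ > 0 with s_β·s_λ < 1, β₀ ∈ ℝ, λ₀ ≥ 0. Then the proximal cost F(β,λ) = λ|β| + (β−β₀)²/(2s_β) + (λ−λ₀)²/(2s_λ) has a unique global minimizer over ℝ × [0,∞). -/
/-!
The cost is strictly convex on the half-plane `λ ≥ 0`, although `λ |β|` alone is not convex:
for a convex combination with weights `a, b`, the quadratic terms give back `a b` times
`(Δβ)²/(2 s_β) + (Δλ)²/(2 s_λ)`, and the bilinear term loses at most `a b |Δλ| |Δβ|`, which this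
quadratic form dominates precisely when `s_β s_λ < 1`. On the half-plane the cost is bounded
below by a positive multiple of the squared distance to `(β₀, λ₀)`, so a minimiser exists, and
strict convexity makes it unique.
-/

open Filter Topology Set

noncomputable def proxCost (sβ sl β₀ l0 : ℝ) (p : ℝ × ℝ) : ℝ :=
  p.2 * |p.1| + (p.1 - β₀) ^ 2 / (2 * sβ) + (p.2 - l0) ^ 2 / (2 * sl)

variable {sβ sl : ℝ}

theorem continuous_proxCost (β₀ l0 : ℝ) : Continuous (proxCost sβ sl β₀ l0) := by
  unfold proxCost; fun_prop

lemma quadForm_pos (hsβ : 0 < sβ) (hsl : 0 < sl) (hprod : sβ * sl < 1) {x u v : ℝ}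
    (hu : |u| ≤ |x|) (hxv : x ≠ 0 ∨ v ≠ 0) :
    0 < x ^ 2 / (2 * sβ) + v ^ 2 / (2 * sl) + u * v := by
  have huv : -(|x| * |v|) ≤ u * v := by
    have := mul_le_mul_of_nonneg_right hu (abs_nonneg v)
    rw [← abs_mul] at this
    linarith [neg_abs_le (u * v)]
  have hdef : 0 < sl * (|x| - sβ * |v|) ^ 2 + sβ * (1 - sβ * sl) * v ^ 2 := by
    rcases eq_or_ne v 0 with rfl | hv
    · have : 0 < |x| := abs_pos.2 (hxv.resolve_right (not_not.2 rfl))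
      simpa using mul_pos hsl (pow_pos this 2)
    · have := sub_pos.2 hprod
      positivity
  have hform : x ^ 2 / (2 * sβ) + v ^ 2 / (2 * sl) - |x| * |v|
      = (sl * (|x| - sβ * |v|) ^ 2 + sβ * (1 - sβ * sl) * v ^ 2) / (2 * sβ * sl) := by
    field_simp; rw [← sq_abs x, ← sq_abs v]; ring
  have : 0 < (sl * (|x| - sβ * |v|) ^ 2 + sβ * (1 - sβ * sl) * v ^ 2) / (2 * sβ * sl) := by
    positivity
  linarith

theorem strictConvexOn_proxCost (hsβ : 0 < sβ) (hsl : 0 < sl) (hprod : sβ * sl < 1)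
    (β₀ l0 : ℝ) : StrictConvexOn ℝ (univ ×ˢ Ici 0) (proxCost sβ sl β₀ l0) := by
  refine ⟨convex_univ.prod (convex_Ici 0), ?_⟩
  rintro ⟨x, c⟩ ⟨-, hc : 0 ≤ c⟩ ⟨y, d⟩ ⟨-, hd : 0 ≤ d⟩ hne a b ha hb hab
  have hgap := quadForm_pos hsβ hsl hprod (abs_abs_sub_abs_le_abs_sub x y)
    (v := c - d) (by simpa [sub_eq_zero, or_iff_not_and_not] using hne)
  have habs : |a * x + b * y| ≤ a * |x| + b * |y| := by
    calc |a * x + b * y| ≤ |a * x| + |b * y| := abs_add_le _ _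
      _ = a * |x| + b * |y| := by rw [abs_mul, abs_mul, abs_of_pos ha, abs_of_pos hb]
  obtain rfl : b = 1 - a := by linarith
  simp only [proxCost, Prod.smul_mk, Prod.mk_add_mk, smul_eq_mul]
  calc _ ≤ (a * c + (1 - a) * d) * (a * |x| + (1 - a) * |y|)
          + (a * x + (1 - a) * y - β₀) ^ 2 / (2 * sβ)
          + (a * c + (1 - a) * d - l0) ^ 2 / (2 * sl) := by gcongr
    _ = a * (c * |x| + (x - β₀) ^ 2 / (2 * sβ) + (c - l0) ^ 2 / (2 * sl))
          + (1 - a) * (d * |y| + (y - β₀) ^ 2 / (2 * sβ) + (d - l0) ^ 2 / (2 * sl))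
          - a * (1 - a) *
            ((x - y) ^ 2 / (2 * sβ) + (c - d) ^ 2 / (2 * sl) + (|x| - |y|) * (c - d)) := by
        ring
    _ < _ := by linarith [mul_pos (mul_pos ha hb) hgap]

lemma dist_sq_div_le_proxCost (hsβ : 0 < sβ) (hsl : 0 < sl) (β₀ l0 : ℝ) {p : ℝ × ℝ}
    (hp : 0 ≤ p.2) : dist p (β₀, l0) ^ 2 / (2 * (sβ + sl)) ≤ proxCost sβ sl β₀ l0 p := by
  have hdist : dist p (β₀, l0) ^ 2 ≤ (p.1 - β₀) ^ 2 + (p.2 - l0) ^ 2 := by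
    rw [Prod.dist_eq, Real.dist_eq, Real.dist_eq, ← sq_abs (p.1 - β₀), ← sq_abs (p.2 - l0)]
    rcases le_total |p.1 - β₀| |p.2 - l0| with h | h
    · rw [max_eq_right h]; nlinarith
    · rw [max_eq_left h]; nlinarith
  have h1 : (p.1 - β₀) ^ 2 / (2 * (sβ + sl)) ≤ (p.1 - β₀) ^ 2 / (2 * sβ) := by
    gcongr; linarith
  have h2 : (p.2 - l0) ^ 2 / (2 * (sβ + sl)) ≤ (p.2 - l0) ^ 2 / (2 * sl) := by
    gcongr; linarith
  have h3 : dist p (β₀, l0) ^ 2 / (2 * (sβ + sl))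
      ≤ ((p.1 - β₀) ^ 2 + (p.2 - l0) ^ 2) / (2 * (sβ + sl)) := by gcongr
  have := mul_nonneg hp (abs_nonneg p.1)
  rw [add_div] at h3
  unfold proxCost
  linarith

theorem tendsto_proxCost_cocompact (hsβ : 0 < sβ) (hsl : 0 < sl) (β₀ l0 : ℝ) :
    Tendsto (proxCost sβ sl β₀ l0) (cocompact (ℝ × ℝ) ⊓ 𝓟 (univ ×ˢ Ici 0)) atTop := by
  have hdist : Tendsto (fun p => dist p (β₀, l0) ^ 2 / (2 * (sβ + sl)))
      (cocompact (ℝ × ℝ)) atTop :=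
    ((tendsto_pow_atTop two_ne_zero).comp (tendsto_dist_right_cocompact_atTop _)).atTop_div_const
      (by positivity)
  refine tendsto_atTop_mono' _ ?_ (hdist.mono_left inf_le_left)
  filter_upwards [mem_inf_of_right (mem_principal_self _)] with p hp
  exact dist_sq_div_le_proxCost hsβ hsl β₀ l0 hp.2

theorem exists_isMinOn_proxCost (hsβ : 0 < sβ) (hsl : 0 < sl) (β₀ l0 : ℝ) :
    ∃ p ∈ univ ×ˢ Ici 0, IsMinOn (proxCost sβ sl β₀ l0) (univ ×ˢ Ici 0) p :=
  (continuous_proxCost β₀ l0).continuousOn.exists_isMinOn' (isClosed_univ.prod isClosed_Ici)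
    (x₀ := 0) (by simp)
    ((tendsto_proxCost_cocompact hsβ hsl β₀ l0).eventually_ge_atTop _)

theorem stmt_4_general (sβ sl β₀ l0 : ℝ) (hsβ : 0 < sβ) (hsl : 0 < sl)
    (hprod : sβ * sl < 1) :
    ∃! p : ℝ × ℝ, 0 ≤ p.2 ∧ ∀ β lam : ℝ, 0 ≤ lam →
      p.2 * |p.1| + (p.1 - β₀)^2 / (2*sβ) + (p.2 - l0)^2 / (2*sl) ≤
        lam * |β| + (β - β₀)^2 / (2*sβ) + (lam - l0)^2 / (2*sl) := by
  obtain ⟨p, hp, hmin⟩ := exists_isMinOn_proxCost hsβ hsl β₀ l0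
  refine ⟨p, ⟨hp.2, fun β lam hlam => hmin (mk_mem_prod (mem_univ β) hlam)⟩, ?_⟩
  rintro q ⟨hq, hqmin⟩
  exact (strictConvexOn_proxCost hsβ hsl hprod β₀ l0).eq_of_isMinOn
    (fun r hr => hqmin r.1 r.2 hr.2) hmin ⟨mem_univ _, hq⟩ hp

/-- When s_β s_λ < 1, the variable-penalty ℓ1 proximal cost has a unique global
minimizer over ℝ × [0,∞). -/
theorem stmt_4 (sβ sl β₀ l0 : ℝ) (hsβ : 0 < sβ) (hsl : 0 < sl)
    (hprod : sβ * sl < 1) (hl0 : 0 ≤ l0) :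
    ∃! p : ℝ × ℝ, 0 ≤ p.2 ∧ ∀ β lam : ℝ, 0 ≤ lam →
      p.2 * |p.1| + (p.1 - β₀)^2 / (2*sβ) + (p.2 - l0)^2 / (2*sl) ≤
        lam * |β| + (β - β₀)^2 / (2*sβ) + (lam - l0)^2 / (2*sl) :=
  stmt_4_general sβ sl β₀ l0 hsβ hsl hprod
end

section
/- Let s_β, s_λ > 0 with s_β·s_λ < 1, β₀ ∈ ℝ, and λ₀ ≥ 0 with λ₀ < s_λ|β₀|. Then (β₀, 0) is a global minimizer of the proximal cost F(β,λ) = λ|β| + (β−β₀)²/(2s_β) + (λ−λ₀)²/(2s_λ) over ℝ × [0,∞); that is, the optimizing penalty coefficient is λ* = 0 and the optimizing β* = β₀ is not shrunk at all. -/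
/-! Since `|β| ≥ |β₀| - |β - β₀|`, minimizing `λ|β| + (β - β₀)²/(2s_β)` over the distance
`|β - β₀|` costs at most `s_β λ²/2` below `λ|β₀|`. The remaining function of `λ` is
`λ (|β₀| - λ₀/s_λ) + λ² (1/s_λ - s_β)/2` above its value at `λ = 0`, and both coefficients are
nonnegative. -/

theorem mul_le_sq_div_add_mul_sq_div {s : ℝ} (hs : 0 < s) (a b : ℝ) :
    a * b ≤ a ^ 2 / (2 * s) + s * b ^ 2 / 2 := by
  have h : a ^ 2 / (2 * s) + s * b ^ 2 / 2 - a * b = (a - s * b) ^ 2 / (2 * s) := by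
    field_simp
    ring
  rw [← sub_nonneg, h]
  positivity

theorem mul_abs_sub_le_mul_abs_add_sq_div {s lam : ℝ} (hs : 0 < s) (hlam : 0 ≤ lam)
    (β β₀ : ℝ) : lam * |β₀| - s * lam ^ 2 / 2 ≤ lam * |β| + (β - β₀) ^ 2 / (2 * s) := by
  have htri : |β₀| ≤ |β| + |β - β₀| := by
    linarith [abs_sub_abs_le_abs_sub β₀ β, abs_sub_comm β₀ β]
  have hyoung := mul_le_sq_div_add_mul_sq_div hs |β - β₀| lam
  rw [sq_abs] at hyoung
  nlinarith [mul_le_mul_of_nonneg_left htri hlam]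

theorem sq_div_le_mul_sub_add_sq_div {sβ sl lam l0 b : ℝ} (hsl : 0 < sl) (hlam : 0 ≤ lam)
    (hprod : sβ * sl ≤ 1) (hsmall : l0 ≤ sl * b) :
    l0 ^ 2 / (2 * sl) ≤ lam * b - sβ * lam ^ 2 / 2 + (lam - l0) ^ 2 / (2 * sl) := by
  have h : lam * b - sβ * lam ^ 2 / 2 + (lam - l0) ^ 2 / (2 * sl) - l0 ^ 2 / (2 * sl)
      = (lam * (sl * b - l0) + lam ^ 2 * (1 - sβ * sl) / 2) / sl := by
    field_simp
    ring
  have hnum : 0 ≤ lam * (sl * b - l0) + lam ^ 2 * (1 - sβ * sl) / 2 := by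
    have := mul_nonneg hlam (sub_nonneg.2 hsmall)
    have := mul_nonneg (sq_nonneg lam) (sub_nonneg.2 hprod)
    linarith
  rw [← sub_nonneg, h]
  exact div_nonneg hnum hsl.le

theorem stmt_8_general (sβ sl β₀ l0 : ℝ) (hsβ : 0 < sβ) (hsl : 0 < sl)
    (hprod : sβ * sl < 1) (hsmall : l0 < sl * |β₀|) :
    ∀ β lam : ℝ, 0 ≤ lam →
      (0:ℝ) * |β₀| + (β₀ - β₀)^2 / (2*sβ) + ((0:ℝ) - l0)^2 / (2*sl) ≤
        lam * |β| + (β - β₀)^2 / (2*sβ) + (lam - l0)^2 / (2*sl) := by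
  intro β lam hlam
  have hβ := mul_abs_sub_le_mul_abs_add_sq_div hsβ hlam β β₀
  have hpen := sq_div_le_mul_sub_add_sq_div hsl hlam hprod.le hsmall.le
  simp only [zero_mul, sub_self, zero_sub, neg_sq, ne_eq, OfNat.ofNat_ne_zero,
    not_false_eq_true, zero_pow, zero_div, zero_add]
  linarith

/-- Dual sparsity: when s_β s_λ < 1 and l0 < s_λ|β₀|, the point (β₀, 0) globally
minimizes the proximal cost over ℝ × [0,∞): λ* = 0 and β* = β₀ is not shrunk. -/
theorem stmt_8 (sβ sl β₀ l0 : ℝ) (hsβ : 0 < sβ) (hsl : 0 < sl)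
    (hprod : sβ * sl < 1) (hl0 : 0 ≤ l0) (hsmall : l0 < sl * |β₀|) :
    ∀ β lam : ℝ, 0 ≤ lam →
      (0:ℝ) * |β₀| + (β₀ - β₀)^2 / (2*sβ) + ((0:ℝ) - l0)^2 / (2*sl) ≤
        lam * |β| + (β - β₀)^2 / (2*sβ) + (lam - l0)^2 / (2*sl) :=
  stmt_8_general sβ sl β₀ l0 hsβ hsl hprod hsmall
end
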